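/- A simple matroid M has a unique minimal tropical basis if and only if the set of closed circuits {C ∈ 𝒞 : cl(C) = C} is itself a tropical basis of M. -/

import Mathlib

open Set

namespace TropicalPaper

variable {α : Type*}

/-- A circuit of a matroid is a minimal dependent set. -/
def Circuit (M : Matroid α) (C : Set α) : Prop := Minimal M.Dep C

/-- A matroid is simple if every circuit has at least 3 elements
(equivalently: no loops and no parallel pairs). -/
def Simple (M : Matroid α) : Prop := ∀ C, Circuit M C → 3 ≤ C.ncard

/-- A set `𝒞'` of circuits of `M` is a tropical basis if for every non-closed
set `X` there is `C ∈ 𝒞'` with `|C \ X| = 1`. -/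
def TropicalBasis (M : Matroid α) (𝒞' : Set (Set α)) : Prop :=
  (∀ C ∈ 𝒞', Circuit M C) ∧
  ∀ X ⊆ M.E, M.closure X ≠ X → ∃ C ∈ 𝒞', (C \ X).ncard = 1

/-- A tropical basis is minimal if no circuit can be removed from it. -/
def MinimalTropicalBasis (M : Matroid α) (𝒞' : Set (Set α)) : Prop :=
  TropicalBasis M 𝒞' ∧ ∀ C ∈ 𝒞', ¬ TropicalBasis M (𝒞' \ {C})

/-- `A` is orthogonal to a family `𝒟` if `|A ∩ D| ≠ 1` for all `D ∈ 𝒟`. -/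
def Orthogonal (A : Set α) (𝒟 : Set (Set α)) : Prop :=
  ∀ D ∈ 𝒟, (A ∩ D).ncard ≠ 1

/-- The rank of a set: the maximal cardinality of an independent subset. -/
noncomputable def rk (M : Matroid α) (X : Set α) : ℕ :=
  sSup {n | ∃ I, I ⊆ X ∧ M.Indep I ∧ I.ncard = n}

/-- `D` is a double circuit if `rank D = |D| - 2 = rank (D \ {e})` for all `e ∈ D`. -/
def DoubleCircuit (M : Matroid α) (D : Set α) : Prop :=
  D ⊆ M.E ∧ D.Finite ∧
    ∀ e ∈ D, rk M D = D.ncard - 2 ∧ rk M (D \ {e}) = D.ncard - 2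

/-- `P` is the canonical partition of the double circuit `D`: a partition of `D`
into nonempty parts whose complements within `D` are exactly the circuits contained
in `D`. The degree of the double circuit is the number of parts of `P`. -/
def DCPartition (M : Matroid α) (D : Set α) (P : Set (Set α)) : Prop :=
  (∀ p ∈ P, p.Nonempty) ∧ (∀ p ∈ P, p ⊆ D) ∧ P.PairwiseDisjoint id ∧
    ⋃₀ P = D ∧ ∀ C, (Circuit M C ∧ C ⊆ D) ↔ ∃ p ∈ P, C = D \ p

/-- A matroid is binary iff the symmetric difference of any two distinct circuits
contains a circuit. -/
def Binary (M : Matroid α) : Prop :=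
  ∀ C₁ C₂, Circuit M C₁ → Circuit M C₂ → C₁ ≠ C₂ →
    ∃ C, C ⊆ (C₁ \ C₂) ∪ (C₂ \ C₁) ∧ Circuit M C

/-! ### Auxiliary lemmas -/

lemma Circuit.dep {M : Matroid α} {C : Set α} (hC : Circuit M C) : M.Dep C := hC.1

lemma Circuit.subset_ground {M : Matroid α} {C : Set α} (hC : Circuit M C) : C ⊆ M.E :=
  hC.1.subset_ground

lemma Circuit.nonempty {M : Matroid α} {C : Set α} (hC : Circuit M C) : C.Nonempty :=
  hC.1.nonempty

lemma Circuit.eq_of_subset {M : Matroid α} {C D : Set α} (hC : Circuit M C) (hD : Circuit M D)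
    (h : D ⊆ C) : D = C :=
  subset_antisymm h (hC.2 hD.1 h)

lemma Circuit.diff_indep {M : Matroid α} {C : Set α} {e : α} (hC : Circuit M C) (he : e ∈ C) :
    M.Indep (C \ {e}) := by
  rw [← Matroid.not_dep_iff (diff_subset.trans hC.subset_ground)]
  intro hd
  exact (notMem_diff_of_mem rfl : e ∉ C \ {e}) (hC.2 hd diff_subset he)

lemma Circuit.mem_closure_diff {M : Matroid α} {C : Set α} {e : α} (hC : Circuit M C)
    (he : e ∈ C) : e ∈ M.closure (C \ {e}) := by
  have hI := hC.diff_indep he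
  rw [hI.mem_closure_iff]
  left
  rw [insert_diff_singleton, insert_eq_of_mem he]
  exact hC.dep

lemma Circuit.closure_diff {M : Matroid α} {C : Set α} {e : α} (hC : Circuit M C) (he : e ∈ C) :
    M.closure (C \ {e}) = M.closure C := by
  refine subset_antisymm (M.closure_subset_closure diff_subset) ?_
  refine M.closure_subset_closure_of_subset_closure (fun x hx => ?_)
  rcases eq_or_ne x e with rfl | hne
  · exact hC.mem_closure_diff he
  · exact M.subset_closure _ (diff_subset.trans hC.subset_ground) ⟨hx, hne⟩

/-- A finite set satisfying a property on sets has a subset minimally satisfying it. -/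
lemma exists_min_subset {β : Type*} {P : Set β → Prop} {X : Set β} (hfin : X.Finite)
    (hX : P X) : ∃ C, C ⊆ X ∧ P C ∧ ∀ Y, P Y → Y ⊆ C → C = Y := by
  have hs : {Y | Y ⊆ X ∧ P Y}.Finite := hfin.finite_subsets.subset fun Y hY => hY.1
  obtain ⟨a, ha, hmin⟩ := Set.Finite.exists_minimalFor id _ hs ⟨X, Subset.rfl, hX⟩
  exact ⟨a, ha.1, ha.2, fun Y hY hYa => subset_antisymm (hmin ⟨hYa.trans ha.1, hY⟩ hYa) hYa⟩

/-- Every dependent set in a finite matroid contains a circuit. -/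
lemma Dep.exists_circuit_subset {M : Matroid α} [M.Finite] {X : Set α} (hX : M.Dep X) :
    ∃ C, C ⊆ X ∧ Circuit M C := by
  obtain ⟨C, hCX, hC, hmin⟩ := exists_min_subset (M.set_finite X hX.subset_ground) hX
  exact ⟨C, hCX, hC, fun Y hY hYC => (hmin Y hY hYC).subset⟩

/-- Fundamental-circuit-type lemma. -/
lemma exists_circuit_of_mem_closure {M : Matroid α} [M.Finite] {X : Set α} {e : α}
    (hX : X ⊆ M.E) (he : e ∈ M.closure X) (heX : e ∉ X) :
    ∃ C, Circuit M C ∧ e ∈ C ∧ C ⊆ insert e X := by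
  obtain ⟨I, hI⟩ := M.exists_isBasis X hX
  have hecl : e ∈ M.closure I := by rwa [hI.closure_eq_closure]
  have heI : e ∉ I := fun h => heX (hI.subset h)
  have hdep : M.Dep (insert e I) := by
    rcases (hI.indep.mem_closure_iff).mp hecl with h | h
    · exact h
    · exact absurd h heI
  obtain ⟨C, hCX, hC⟩ := Dep.exists_circuit_subset hdep
  refine ⟨C, hC, ?_, hCX.trans (insert_subset_insert hI.subset)⟩
  by_contra heC
  have hsub : C ⊆ I := fun x hx => (hCX hx).resolve_left (fun h => heC (h ▸ hx))
  exact (hI.indep.subset hsub).not_dep hC.dep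

/-- From a covering circuit: the missing element and its properties. -/
lemma cover_structure {M : Matroid α} {X C : Set α} (hC : Circuit M C) (hXE : X ⊆ M.E)
    (h : (C \ X).ncard = 1) :
    ∃ g, g ∈ C ∧ g ∉ X ∧ g ∈ M.closure X ∧ C ⊆ insert g X := by
  obtain ⟨g, hg⟩ := Set.ncard_eq_one.mp h
  have hgm : g ∈ C \ X := by rw [hg]; exact rfl
  have hgC : g ∈ C := hgm.1
  have hgX : g ∉ X := hgm.2
  have hsub : C ⊆ insert g X := by
    intro x hx
    rcases eq_or_ne x g with rfl | hne
    · exact mem_insert _ _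
    · by_contra hxX
      have : x ∈ C \ X := ⟨hx, fun h' => hxX (mem_insert_of_mem _ h')⟩
      exact hne (by rwa [hg, mem_singleton_iff] at this)
  have hdiff : C \ {g} ⊆ X := by
    rintro x ⟨hx, hxg⟩
    exact ((hsub hx).resolve_left (by simpa using hxg))
  exact ⟨g, hgC, hgX, M.closure_subset_closure hdiff (hC.mem_closure_diff hgC), hsub⟩

/-- Every closed circuit belongs to every tropical basis. -/
lemma closed_circuit_mem {M : Matroid α} {T : Set (Set α)} (hT : TropicalBasis M T)
    {C : Set α} (hC : Circuit M C) (hcl : M.closure C = C) : C ∈ T := by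
  obtain ⟨e, he⟩ := hC.nonempty
  have hXE : C \ {e} ⊆ M.E := diff_subset.trans hC.subset_ground
  have hne : M.closure (C \ {e}) ≠ C \ {e} := by
    rw [hC.closure_diff he, hcl]
    intro h
    exact ((h ▸ he : e ∈ C \ {e})).2 rfl
  obtain ⟨C', hC'T, hcard⟩ := hT.2 _ hXE hne
  have hC' := hT.1 _ hC'T
  obtain ⟨g, hgC', hgX, hgcl, hsub⟩ := cover_structure hC' hXE hcard
  rw [hC.closure_diff he, hcl] at hgcl
  have hge : g = e := by
    by_contra h
    exact hgX ⟨hgcl, h⟩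
  subst hge
  have hCC : C' ⊆ C := by
    rw [insert_diff_singleton, insert_eq_of_mem he] at hsub
    exact hsub
  rwa [hC.eq_of_subset hC' hCC] at hC'T

/-- Key lemma: if `C` is a non-closed circuit, every non-closed set is covered by a
circuit different from `C`. -/
lemma exists_cover_ne {M : Matroid α} [M.Finite] (hM : Simple M) {C X : Set α}
    (hC : Circuit M C) (hCcl : M.closure C ≠ C) (hX : X ⊆ M.E) (hXcl : M.closure X ≠ X) :
    ∃ D, Circuit M D ∧ D ≠ C ∧ (D \ X).ncard = 1 := by
  obtain ⟨e, hecl, heX⟩ : ∃ e, e ∈ M.closure X ∧ e ∉ X := by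
    by_contra h
    push_neg at h
    exact hXcl (subset_antisymm (fun x hx => h x hx) (M.subset_closure X hX))
  obtain ⟨D₀, hD₀, heD₀, hD₀sub⟩ := exists_circuit_of_mem_closure hX hecl heX
  have hD₀card : (D₀ \ X).ncard = 1 := by
    have hs : D₀ \ X = {e} := by
      apply subset_antisymm
      · rintro x ⟨hx, hxX⟩
        exact (hD₀sub hx).resolve_right hxX
      · rintro x (rfl : x = e)
        exact ⟨heD₀, heX⟩
    rw [hs, ncard_singleton]
  rcases eq_or_ne D₀ C with heq | hne
  swap
  · exact ⟨D₀, hD₀, hne, hD₀card⟩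
  rw [heq] at heD₀ hD₀sub
  -- now C itself covers X : C \ X = {e}
  obtain ⟨f, hfcl, hfC⟩ : ∃ f, f ∈ M.closure C ∧ f ∉ C := by
    by_contra h
    push_neg at h
    exact hCcl (subset_antisymm (fun x hx => h x hx) (M.subset_closure C hC.subset_ground))
  have heC : e ∈ C := heD₀
  have hCdiff : C \ {e} ⊆ X := by
    rintro x ⟨hx, hxe⟩
    exact (hD₀sub hx).resolve_left (by simpa using hxe)
  rcases em (f ∈ X) with hfX | hfX
  · -- f ∈ X : use a basis of S = insert f (C \ {e}) containing f
    set S := insert f (C \ {e}) with hS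
    have hfE : f ∈ M.E := M.closure_subset_ground _ hfcl
    have hSE : S ⊆ M.E := insert_subset hfE (diff_subset.trans hC.subset_ground)
    have hfind : M.Indep {f} := by
      rw [← Matroid.not_dep_iff (singleton_subset_iff.2 hfE)]
      intro hdep
      obtain ⟨C', hC'sub, hC'⟩ := Dep.exists_circuit_subset hdep
      have h3 := hM C' hC'
      have h1 : C'.ncard ≤ 1 := by
        have := Set.ncard_le_ncard hC'sub (finite_singleton f)
        simpa using this
      omega
    obtain ⟨I, hIb, hfI⟩ := hfind.subset_isBasis_of_subset
      (singleton_subset_iff.2 (mem_insert _ _)) hSE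
    have hfI' : f ∈ I := hfI rfl
    have heS : e ∉ S := by
      rintro (rfl | ⟨-, h⟩)
      · exact hfC heC
      · exact h rfl
    have heI : e ∉ I := fun h => heS (hIb.subset h)
    have hecl' : e ∈ M.closure I := by
      rw [hIb.closure_eq_closure]
      exact M.closure_subset_closure (subset_insert _ _)
        ((hC.closure_diff heC).symm ▸ (M.subset_closure C hC.subset_ground heC) :
          e ∈ M.closure (C \ {e}))
    obtain ⟨D, hD, heD, hDsub⟩ :=
      exists_circuit_of_mem_closure hIb.indep.subset_ground hecl' heI
    refine ⟨D, hD, ?_, ?_⟩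
    · intro hDC
      rw [hDC] at hDsub
      -- then C \ {e} ⊆ I, together with f ∈ I we get I = S, but S is dependent
      have hCeI : C \ {e} ⊆ I := by
        rintro x ⟨hx, hxe⟩
        exact (hDsub hx).resolve_left (by simpa using hxe)
      have hIS : I = S := subset_antisymm hIb.subset (insert_subset hfI' hCeI)
      have hSdep : M.Dep S := by
        rw [Matroid.dep_iff]
        refine ⟨fun hSind => ?_, hSE⟩
        have hfclD : f ∈ M.closure (C \ {e}) := (hC.closure_diff heC).symm ▸ hfcl
        rcases ((hC.diff_indep heC).mem_closure_iff).mp hfclD with hdep | hmem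
        · exact hdep.not_indep hSind
        · exact hfC hmem.1
      rw [hIS] at hIb
      exact hSdep.not_indep hIb.indep
    · have hs : D \ X = {e} := by
        apply subset_antisymm
        · rintro x ⟨hx, hxX⟩
          rcases hDsub hx with rfl | hxI
          · rfl
          · rcases hIb.subset hxI with rfl | hxC
            · exact absurd hfX hxX
            · exact absurd (hCdiff hxC) hxX
        · rintro x (rfl : x = e)
          exact ⟨heD, heX⟩
      rw [hs, ncard_singleton]
  · -- f ∉ X : the circuit through f inside (C \ {e}) ∪ {f} works
    have hfclD : f ∈ M.closure (C \ {e}) := (hC.closure_diff heC).symm ▸ hfcl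
    have hfmem : f ∉ C \ {e} := fun h => hfC h.1
    obtain ⟨D, hD, hfD, hDsub⟩ :=
      exists_circuit_of_mem_closure (diff_subset.trans hC.subset_ground) hfclD hfmem
    refine ⟨D, hD, fun h => hfC (h ▸ hfD), ?_⟩
    have hs : D \ X = {f} := by
      apply subset_antisymm
      · rintro x ⟨hx, hxX⟩
        exact (hDsub hx).resolve_right (fun h => hxX (hCdiff h))
      · rintro x (rfl : x = f)
        exact ⟨hfD, hfX⟩
    rw [hs, ncard_singleton]

/-- Every tropical basis of a finite matroid contains a minimal tropical basis. -/
lemma exists_minimal_tb {M : Matroid α} [M.Finite] {T : Set (Set α)}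
    (hT : TropicalBasis M T) : ∃ B, B ⊆ T ∧ MinimalTropicalBasis M B := by
  have hTfin : T.Finite :=
    M.ground_finite.finite_subsets.subset (fun C hC => (hT.1 C hC).subset_ground)
  obtain ⟨B, hBT, hB, hmin⟩ := exists_min_subset hTfin hT
  refine ⟨B, hBT, hB, fun C hCB hTB => ?_⟩
  exact ((hmin _ hTB diff_subset).subset hCB).2 rfl

theorem stmt15 (M : Matroid α) [M.Finite] (hM : Simple M) :
    (∃! B, MinimalTropicalBasis M B) ↔
      TropicalBasis M {C | Circuit M C ∧ M.closure C = C} := by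
  constructor
  · rintro ⟨B, hB, huniq⟩
    refine ⟨fun C hC => hC.1, fun X hXE hXcl => ?_⟩
    by_contra hno
    push_neg at hno
    obtain ⟨C, hCB, hCcov⟩ := hB.1.2 X hXE hXcl
    have hC := hB.1.1 C hCB
    have hCcl : M.closure C ≠ C := fun h => hno C ⟨hC, h⟩ hCcov
    have hT : TropicalBasis M ({D | Circuit M D} \ {C}) := by
      refine ⟨fun D hD => hD.1, fun X' hX'E hX'cl => ?_⟩
      obtain ⟨D, hD, hDne, hcard⟩ := exists_cover_ne hM hC hCcl hX'E hX'cl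
      exact ⟨D, ⟨hD, hDne⟩, hcard⟩
    obtain ⟨B', hB'sub, hB'⟩ := exists_minimal_tb hT
    have hBB : B' = B := huniq B' hB'
    have : C ∈ B' := hBB.symm.subset hCB
    exact (hB'sub this).2 rfl
  · intro h
    refine ⟨{C | Circuit M C ∧ M.closure C = C}, ⟨h, fun C hC hT' => ?_⟩, ?_⟩
    · exact (closed_circuit_mem hT' hC.1 hC.2).2 rfl
    · rintro B ⟨hBt, hBmin⟩
      have hsub : {C | Circuit M C ∧ M.closure C = C} ⊆ B :=
        fun C hC => closed_circuit_mem hBt hC.1 hC.2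
      refine subset_antisymm ?_ hsub
      by_contra hnot
      obtain ⟨C₀, hC₀B, hC₀⟩ := not_subset.mp hnot
      refine hBmin C₀ hC₀B ⟨fun D hD => hBt.1 D hD.1, fun X hXE hXcl => ?_⟩
      obtain ⟨C, hC, hcard⟩ := h.2 X hXE hXcl
      exact ⟨C, ⟨hsub hC, fun heq => hC₀ ((heq : C = C₀) ▸ hC)⟩, hcard⟩

end TropicalPaper
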